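/- Assume X and Y are nonempty and bounded, and let h* be the minimum of z over X × Y. If the system {−Aᵀu − C y ≤ g, a·u − e·y < −h*, u ≥ 0} has no solution (u, y) ∈ ℝ^q × ℝ^m, then the system {A x ≤ a, Cᵀx = −e, g·x = h*, x ≥ 0} has a solution, and every solution x* of this system together with an arbitrary y ∈ Y satisfies z(x*, y) = h*, i.e. (x*, y) is an optimal solution of the disjoint bilinear programming problem. -/

import Mathlib

/-!
If `Cᵀ x = -e`, the bilinear and linear terms in `y` cancel and `z x y = g ⬝ᵥ x` for every `y`;
this gives the second claim and shows `h* ≤ g ⬝ᵥ x` for every such `x ∈ X`. It remains to find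
`x ∈ X` with `Cᵀ x = -e` and `g ⬝ᵥ x ≤ h*`. Otherwise Farkas' lemma yields multipliers
`(u, r, y)`, `u, r ≥ 0`, certifying infeasibility. If `r > 0`, dividing by `r` solves the
excluded system. If `r = 0`, `(u, y)` is a recession direction along which `a ⬝ᵥ u - e ⬝ᵥ y`
decreases without bound, starting from a point `u₀ ≥ 0` with `-Aᵀ u₀ ≤ g`; such a point exists
by Farkas' lemma again, since `X` is nonempty and bounded.

Farkas' lemma is the separation theorem for the closed convex cone `{M x | x ≥ 0}`; that this cone
is closed follows from the conic Carathéodory theorem.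
-/

open Matrix Function

section ConicCaratheodory

variable {ι : Type*} [Fintype ι]

theorem Fintype.linearIndepOn_iff {R M : Type*} [Ring R] [AddCommGroup M] [Module R M]
    {v : ι → M} {s : Set ι} :
    LinearIndepOn R v s ↔
      ∀ c : ι → R, support c ⊆ s → Fintype.linearCombination R v c = 0 → c = 0 := by
  rw [_root_.linearIndepOn_iff, Finsupp.equivFunOnFinite.forall_congr_left]
  simp [Finsupp.mem_supported, Finsupp.linearCombination_apply,
    Finsupp.sum_fintype, Fintype.linearCombination_apply, ← Finsupp.coe_eq_zero]

theorem exists_nonneg_sub_smul_support_ssubset {t c : ι → ℝ} (ht : 0 ≤ t)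
    (hc : support c ⊆ support t) (hpos : ∃ i, 0 < c i) :
    ∃ r : ℝ, 0 ≤ t - r • c ∧ support (t - r • c) ⊂ support t := by
  classical
  obtain ⟨i, hi⟩ := hpos
  obtain ⟨i₀, hi₀, hmin⟩ := (Finset.univ.filter (0 < c ·)).exists_min_image
    (fun i => t i / c i) ⟨i, by simpa using hi⟩
  simp only [Finset.mem_filter, Finset.mem_univ, true_and] at hi₀ hmin
  -- the largest step keeping `t - r • c` nonnegative; it vanishes at the minimizing index `i₀`
  refine ⟨t i₀ / c i₀, fun i => ?_, ?_⟩
  · rcases lt_or_ge 0 (c i) with hci | hci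
    · have := (le_div_iff₀ hci).1 (hmin i hci)
      simp only [Pi.zero_apply, Pi.sub_apply, Pi.smul_apply, smul_eq_mul]
      linarith
    · have : 0 ≤ t i₀ / c i₀ := div_nonneg (ht i₀) hi₀.le
      have hti : 0 ≤ t i := ht i
      simp only [Pi.zero_apply, Pi.sub_apply, Pi.smul_apply, smul_eq_mul]
      linarith [mul_nonpos_of_nonneg_of_nonpos this hci]
  · have hsub : support (t - (t i₀ / c i₀) • c) ⊆ support t :=
      (support_sub _ _).trans (Set.union_subset le_rfl ((support_smul_subset_right _ _).trans hc))
    refine (Set.ssubset_iff_of_subset hsub).2 ⟨i₀, hc hi₀.ne', ?_⟩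
    simp [div_mul_cancel₀ _ hi₀.ne']

variable {E : Type*} [AddCommGroup E] [Module ℝ E]

theorem exists_nonneg_linearIndepOn_support_linearCombination_eq (v : ι → E) {t : ι → ℝ}
    (ht : 0 ≤ t) :
    ∃ t' : ι → ℝ, 0 ≤ t' ∧ LinearIndepOn ℝ v (support t') ∧
      Fintype.linearCombination ℝ v t' = Fintype.linearCombination ℝ v t := by
  induction hk : (support t).ncard using Nat.strong_induction_on generalizing t with
  | _ k ih =>
    by_cases hli : LinearIndepOn ℝ v (support t)
    · exact ⟨t, ht, hli, rfl⟩
    obtain ⟨c, hcs, hc0, hpos⟩ : ∃ c : ι → ℝ, support c ⊆ support t ∧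
        Fintype.linearCombination ℝ v c = 0 ∧ ∃ i, 0 < c i := by
      simp only [Fintype.linearIndepOn_iff, not_forall] at hli
      obtain ⟨c, hcs, hc0, hc⟩ := hli
      obtain ⟨i, hi⟩ := Function.ne_iff.1 hc
      rcases (hi : c i ≠ 0).lt_or_gt with hneg | hpos
      · exact ⟨-c, by rwa [support_neg], by simp [hc0], i, by simpa using hneg⟩
      · exact ⟨c, hcs, hc0, i, hpos⟩
    obtain ⟨r, hr, hrs⟩ := exists_nonneg_sub_smul_support_ssubset ht hcs hpos
    obtain ⟨t', ht', hli', heq⟩ := ih _ (hk ▸ Set.ncard_lt_ncard hrs) hr rfl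
    exact ⟨t', ht', hli', by simp [heq, hc0]⟩

variable [TopologicalSpace E] [IsTopologicalAddGroup E] [ContinuousSMul ℝ E] [T2Space E]

theorem isClosed_image_linearCombination_nonneg_of_linearIndepOn {v : ι → E} {s : Set ι}
    (hs : LinearIndepOn ℝ v s) :
    IsClosed (Fintype.linearCombination ℝ v '' {t | 0 ≤ t ∧ support t ⊆ s}) := by
  let W : Submodule ℝ (ι → ℝ) := Submodule.pi sᶜ fun _ => ⊥
  have hW : ∀ t, t ∈ W ↔ support t ⊆ s := fun t => by
    simp only [W, Submodule.mem_pi, Set.mem_compl_iff, Submodule.mem_bot, support_subset_iff']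
  have hker : LinearMap.ker ((Fintype.linearCombination ℝ v).comp W.subtype) = ⊥ := by
    refine LinearMap.ker_eq_bot'.2 fun w hw => ?_
    exact Subtype.ext (Fintype.linearIndepOn_iff.1 hs w ((hW w).1 w.2) hw)
  convert (LinearMap.isClosedEmbedding_of_injective hker).isClosedMap _
    (isClosed_Ici.preimage continuous_subtype_val)
  ext x
  constructor
  · rintro ⟨t, ⟨ht, hts⟩, rfl⟩
    exact ⟨⟨t, (hW t).2 hts⟩, ht, rfl⟩
  · rintro ⟨w, hw, rfl⟩
    exact ⟨w, ⟨hw, (hW w).1 w.2⟩, rfl⟩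

theorem isClosed_image_linearCombination_nonneg (v : ι → E) :
    IsClosed (Fintype.linearCombination ℝ v '' Set.Ici 0) := by
  have hunion : Fintype.linearCombination ℝ v '' Set.Ici 0 =
      ⋃ s ∈ {s : Set ι | LinearIndepOn ℝ v s},
        Fintype.linearCombination ℝ v '' {t | 0 ≤ t ∧ support t ⊆ s} := by
    ext x
    simp only [Set.mem_image, Set.mem_Ici, Set.mem_iUnion, Set.mem_ofPred_eq, exists_prop]
    constructor
    · rintro ⟨t, ht, rfl⟩
      obtain ⟨t', ht', hli, heq⟩ := exists_nonneg_linearIndepOn_support_linearCombination_eq v ht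
      exact ⟨support t', hli, t', ⟨ht', subset_rfl⟩, heq⟩
    · rintro ⟨s, -, t, ⟨ht, -⟩, rfl⟩
      exact ⟨t, ht, rfl⟩
  rw [hunion]
  exact (Set.toFinite _).isClosed_biUnion fun s hs =>
    isClosed_image_linearCombination_nonneg_of_linearIndepOn hs

end ConicCaratheodory

theorem not_isBounded_of_add_smul_mem {E : Type*} [NormedAddCommGroup E] [NormedSpace ℝ E]
    {S : Set E} {x d : E} (hd : d ≠ 0) (h : ∀ t : ℝ, 0 ≤ t → x + t • d ∈ S) :
    ¬Bornology.IsBounded S := by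
  intro hS
  obtain ⟨R, hR⟩ := isBounded_iff_forall_norm_le.1 hS
  have hxR : ‖x‖ ≤ R := by simpa using hR _ (h 0 le_rfl)
  have hd' : 0 < ‖d‖ := norm_pos_iff.2 hd
  set t := (R + ‖x‖ + 1) / ‖d‖
  have ht : 0 ≤ t := div_nonneg (by linarith [norm_nonneg x]) hd'.le
  have htd : ‖t • d‖ = R + ‖x‖ + 1 := by
    rw [norm_smul, Real.norm_of_nonneg ht, div_mul_cancel₀ _ hd'.ne']
  have := norm_sub_le (x + t • d) x
  rw [add_sub_cancel_left, htd] at this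
  linarith [hR _ (h t ht)]

namespace Matrix

variable {ι κ μ : Type*} [Fintype κ] [Fintype μ]

theorem farkas [Fintype ι] (M : Matrix κ ι ℝ) (c : κ → ℝ) (h : ¬∃ x, 0 ≤ x ∧ M *ᵥ x = c) :
    ∃ y, 0 ≤ Mᵀ *ᵥ y ∧ c ⬝ᵥ y < 0 := by
  classical
  have hM : M.mulVecLin = Fintype.linearCombination ℝ M.col := by
    ext x k
    simp [Fintype.linearCombination_apply, mulVec, dotProduct, mul_comm]
  let K : ProperCone ℝ (κ → ℝ) :=
    ⟨(PointedCone.positive ℝ (ι → ℝ)).map M.mulVecLin, by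
      simpa [hM] using isClosed_image_linearCombination_nonneg M.col⟩
  have hmem : ∀ x, x ∈ K ↔ ∃ t, 0 ≤ t ∧ M *ᵥ t = x := fun x => Iff.rfl
  obtain ⟨f, hfK, hfc⟩ := K.hyperplane_separation_point (x₀ := c) (by rwa [hmem])
  set y : κ → ℝ := fun k => f fun j => if k = j then 1 else 0
  have hf : ∀ x, f x = x ⬝ᵥ y := fun x =>
    (f : (κ → ℝ) →ₗ[ℝ] ℝ).pi_apply_eq_sum_univ x
  refine ⟨y, fun i => ?_, hf c ▸ hfc⟩
  have := hfK (M *ᵥ Pi.single i 1) ((hmem _).2 ⟨_, Pi.single_nonneg.2 zero_le_one, rfl⟩)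
  rwa [hf, mulVec_single_one] at this

theorem farkas_le [Fintype ι] (M : Matrix κ ι ℝ) (c : κ → ℝ) (h : ¬∃ x, 0 ≤ x ∧ M *ᵥ x ≤ c) :
    ∃ y, 0 ≤ y ∧ 0 ≤ Mᵀ *ᵥ y ∧ c ⬝ᵥ y < 0 := by
  classical
  obtain ⟨y, hy, hcy⟩ := farkas (fromCols M (1 : Matrix κ κ ℝ)) c <| by
    rintro ⟨x, hx, hMx⟩
    rw [← Sum.elim_comp_inl_inr x, fromCols_mulVec_sumElim, one_mulVec] at hMx
    exact h ⟨x ∘ Sum.inl, fun i => hx _, hMx ▸ le_add_of_nonneg_right fun k => hx _⟩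
  rw [transpose_fromCols, fromRows_mulVec, transpose_one, one_mulVec] at hy
  exact ⟨y, fun k => hy (Sum.inr k), fun i => hy (Sum.inl i), hcy⟩

theorem farkas_le_eq [Fintype ι] (P : Matrix κ ι ℝ) (D : Matrix μ ι ℝ) (p : κ → ℝ) (d : μ → ℝ)
    (h : ¬∃ x, 0 ≤ x ∧ P *ᵥ x ≤ p ∧ D *ᵥ x = d) :
    ∃ u w, 0 ≤ u ∧ 0 ≤ Pᵀ *ᵥ u + Dᵀ *ᵥ w ∧ p ⬝ᵥ u + d ⬝ᵥ w < 0 := by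
  obtain ⟨y, hy, hPy, hpy⟩ :=
      farkas_le (fromRows P (fromRows D (-D))) (Sum.elim p (Sum.elim d (-d))) <| by
    rintro ⟨x, hx, hPx⟩
    simp only [fromRows_mulVec, Sum.elim_le_elim_iff, neg_mulVec, neg_le_neg_iff] at hPx
    exact h ⟨x, hx, hPx.1, hPx.2.1.antisymm hPx.2.2⟩
  rw [← Sum.elim_comp_inl_inr y, ← Sum.elim_comp_inl_inr (y ∘ Sum.inr)] at hPy hpy
  simp only [transpose_fromRows, fromCols_mulVec_sumElim, sumElim_dotProduct_sumElim,
    transpose_neg, neg_mulVec, neg_dotProduct] at hPy hpy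
  refine ⟨y ∘ Sum.inl, (y ∘ Sum.inr) ∘ Sum.inl - (y ∘ Sum.inr) ∘ Sum.inr, fun k => hy _, ?_, ?_⟩
  · simpa [sub_eq_add_neg, mulVec_add, mulVec_neg, add_assoc] using hPy
  · simpa [dotProduct_sub, sub_eq_add_neg, add_assoc] using hpy

theorem exists_nonneg_neg_transpose_mulVec_le [Fintype ι] (A : Matrix κ ι ℝ) (a : κ → ℝ)
    (g : ι → ℝ)
    (hne : {x | A *ᵥ x ≤ a ∧ 0 ≤ x}.Nonempty)
    (hbdd : Bornology.IsBounded {x | A *ᵥ x ≤ a ∧ 0 ≤ x}) :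
    ∃ u, 0 ≤ u ∧ -(Aᵀ *ᵥ u) ≤ g := by
  by_contra h
  obtain ⟨d, hd, hAd, hgd⟩ := farkas_le (-Aᵀ) g (by simpa [neg_mulVec] using h)
  rw [transpose_neg, transpose_transpose, neg_mulVec, neg_nonneg] at hAd
  have hd0 : d ≠ 0 := by
    rintro rfl
    simp at hgd
  obtain ⟨x, hAx, hx⟩ := hne
  refine not_isBounded_of_add_smul_mem (S := {x | A *ᵥ x ≤ a ∧ 0 ≤ x}) (x := x) hd0
    (fun t ht => ⟨?_, ?_⟩) hbdd
  · rw [mulVec_add, mulVec_smul]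
    exact add_le_of_le_of_nonpos hAx (smul_nonpos_of_nonneg_of_nonpos ht hAd)
  · exact add_nonneg hx (smul_nonneg ht hd)

theorem dotProduct_mulVec_add_dotProduct_eq_zero [Fintype ι] {C : Matrix ι μ ℝ} {e : μ → ℝ}
    {x : ι → ℝ} (hx : Cᵀ *ᵥ x = -e) (y : μ → ℝ) :
    x ⬝ᵥ C *ᵥ y + e ⬝ᵥ y = 0 := by
  rw [dotProduct_mulVec, ← mulVec_transpose, hx, neg_dotProduct, neg_add_cancel]

variable (A : Matrix κ ι ℝ) (C : Matrix ι μ ℝ) (a : κ → ℝ) (g : ι → ℝ) (e : μ → ℝ) (h : ℝ)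

theorem exists_dual_of_pos_certificate {u : κ → ℝ} {w : μ → ℝ} {r : ℝ} (hr : 0 < r) (hu : 0 ≤ u)
    (hcone : 0 ≤ Aᵀ *ᵥ u + r • g + C *ᵥ w) (hobj : a ⬝ᵥ u + r * h - e ⬝ᵥ w < 0) :
    ∃ u y, -(Aᵀ *ᵥ u) - C *ᵥ y ≤ g ∧ a ⬝ᵥ u - e ⬝ᵥ y < -h ∧ 0 ≤ u := by
  refine ⟨r⁻¹ • u, r⁻¹ • w, fun i => ?_, ?_, smul_nonneg (inv_nonneg.2 hr.le) hu⟩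
  · have := mul_nonneg (inv_nonneg.2 hr.le) (hcone i)
    simp only [mulVec_smul, Pi.add_apply, Pi.smul_apply, smul_eq_mul,
      Pi.sub_apply, Pi.neg_apply, mul_add, inv_mul_cancel_left₀ hr.ne'] at this ⊢
    linarith
  · have := mul_lt_mul_of_pos_left hobj (inv_pos.2 hr)
    simp only [dotProduct_smul, smul_eq_mul, mul_add, mul_sub, inv_mul_cancel_left₀ hr.ne',
      mul_zero] at this ⊢
    linarith

theorem exists_dual_of_recession {u₀ u : κ → ℝ} {w : μ → ℝ} (hu₀ : 0 ≤ u₀)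
    (hu₀g : -(Aᵀ *ᵥ u₀) ≤ g) (hu : 0 ≤ u) (hcone : 0 ≤ Aᵀ *ᵥ u + C *ᵥ w)
    (hobj : a ⬝ᵥ u - e ⬝ᵥ w < 0) :
    ∃ u y, -(Aᵀ *ᵥ u) - C *ᵥ y ≤ g ∧ a ⬝ᵥ u - e ⬝ᵥ y < -h ∧ 0 ≤ u := by
  set t := (|a ⬝ᵥ u₀ + h| + 1) / -(a ⬝ᵥ u - e ⬝ᵥ w)
  have ht : 0 ≤ t := div_nonneg (by positivity) (by linarith)
  have htobj : t * (a ⬝ᵥ u - e ⬝ᵥ w) = -(|a ⬝ᵥ u₀ + h| + 1) := by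
    rw [div_mul_eq_mul_div, div_neg, mul_div_cancel_right₀ _ hobj.ne]
  refine ⟨u₀ + t • u, t • w, fun i => ?_, ?_, add_nonneg hu₀ (smul_nonneg ht hu)⟩
  · have := mul_nonneg ht (hcone i)
    have := hu₀g i
    simp only [mulVec_add, mulVec_smul, Pi.add_apply, Pi.smul_apply, smul_eq_mul,
      Pi.sub_apply, Pi.neg_apply, mul_add] at *
    linarith
  · simp only [dotProduct_add, dotProduct_smul, smul_eq_mul]
    linarith [le_abs_self (a ⬝ᵥ u₀ + h), mul_sub t (a ⬝ᵥ u) (e ⬝ᵥ w)]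

theorem exists_primal_of_not_exists_dual [Fintype ι] (hdual : ∃ u₀, 0 ≤ u₀ ∧ -(Aᵀ *ᵥ u₀) ≤ g)
    (hincons : ¬∃ u y, -(Aᵀ *ᵥ u) - C *ᵥ y ≤ g ∧ a ⬝ᵥ u - e ⬝ᵥ y < -h ∧ 0 ≤ u) :
    ∃ x, A *ᵥ x ≤ a ∧ Cᵀ *ᵥ x = -e ∧ g ⬝ᵥ x ≤ h ∧ 0 ≤ x := by
  obtain ⟨u₀, hu₀, hu₀g⟩ := hdual
  by_contra hx
  obtain ⟨v, w, hv, hcone, hobj⟩ := farkas_le_eq (fromRows A (replicateRow Unit g)) Cᵀ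
    (Sum.elim a fun _ => h) (-e) <| by
      rintro ⟨x, hx0, hle, heq⟩
      rw [fromRows_mulVec, replicateRow_mulVec_eq_const, Sum.elim_le_elim_iff] at hle
      exact hx ⟨x, hle.1, heq, hle.2 (), hx0⟩
  have hg : replicateCol Unit g *ᵥ (v ∘ Sum.inr) = v (Sum.inr ()) • g := by
    ext i
    simp [mulVec, dotProduct, mul_comm]
  rw [← Sum.elim_comp_inl_inr v] at hcone hobj
  simp only [transpose_fromRows, fromCols_mulVec_sumElim, transpose_replicateRow, hg,
    transpose_transpose, sumElim_dotProduct_sumElim, neg_dotProduct] at hcone hobj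
  have hobj' : a ⬝ᵥ (v ∘ Sum.inl) + v (Sum.inr ()) * h - e ⬝ᵥ w < 0 := by
    simpa [dotProduct, sub_eq_add_neg, mul_comm] using hobj
  have hu : 0 ≤ v ∘ Sum.inl := fun k => hv _
  rcases (hv (Sum.inr ())).eq_or_lt with hr | hr
  · refine hincons (exists_dual_of_recession A C a g e h (w := w) hu₀ hu₀g hu ?_ ?_)
    · simpa [← hr] using hcone
    · simpa [← hr] using hobj'
  · exact hincons (exists_dual_of_pos_certificate A C a g e h hr hu hcone hobj')

end Matrix

theorem stmt_7_general
    (n m q : ℕ)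
    (C : Matrix (Fin n) (Fin m) ℝ) (A : Matrix (Fin q) (Fin n) ℝ)
    (a : Fin q → ℝ) (g : Fin n → ℝ) (e : Fin m → ℝ)
    (z : (Fin n → ℝ) → (Fin m → ℝ) → ℝ)
    (hz : ∀ x y, z x y = x ⬝ᵥ C.mulVec y + g ⬝ᵥ x + e ⬝ᵥ y)
    (X : Set (Fin n → ℝ)) (Y : Set (Fin m → ℝ))
    (hX : X = {x | A.mulVec x ≤ a ∧ 0 ≤ x})
    (hXne : X.Nonempty) (hYne : Y.Nonempty)
    (hXbd : Bornology.IsBounded X)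
    (hstar : ℝ) (hmin : IsLeast (Set.image2 z X Y) hstar)
    (hincons : ¬ ∃ (u : Fin q → ℝ) (y : Fin m → ℝ),
        -(Aᵀ.mulVec u) - C.mulVec y ≤ g ∧ a ⬝ᵥ u - e ⬝ᵥ y < -hstar ∧ 0 ≤ u) :
    (∃ x : Fin n → ℝ,
        A.mulVec x ≤ a ∧ Cᵀ.mulVec x = -e ∧ g ⬝ᵥ x = hstar ∧ 0 ≤ x) ∧
    (∀ x : Fin n → ℝ,
        A.mulVec x ≤ a → Cᵀ.mulVec x = -e → g ⬝ᵥ x = hstar → 0 ≤ x →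
        ∀ y ∈ Y, z x y = hstar) := by
  have hz_eq : ∀ x, Cᵀ *ᵥ x = -e → ∀ y, z x y = g ⬝ᵥ x := fun x hx y => by
    linarith [hz x y, dotProduct_mulVec_add_dotProduct_eq_zero hx y]
  refine ⟨?_, fun x _ hx hgx _ y _ => (hz_eq x hx y).trans hgx⟩
  subst hX
  obtain ⟨x, hAx, hCx, hgx, hx⟩ := exists_primal_of_not_exists_dual A C a g e hstar
    (exists_nonneg_neg_transpose_mulVec_le A a g hXne hXbd) hincons
  obtain ⟨y, hy⟩ := hYne
  have hxy := hmin.2 (Set.mem_image2_of_mem ⟨hAx, hx⟩ hy)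
  exact ⟨x, hAx, hCx, hgx.antisymm (hz_eq x hCx y ▸ hxy), hx⟩

/-- Theorem 3, property 1) of the paper. -/
theorem stmt_7
    (n m q l : ℕ) (hn : 0 < n) (hm : 0 < m) (hq : 0 < q) (hl : 0 < l)
    (C : Matrix (Fin n) (Fin m) ℝ) (A : Matrix (Fin q) (Fin n) ℝ)
    (B : Matrix (Fin l) (Fin m) ℝ)
    (a : Fin q → ℝ) (b : Fin l → ℝ) (g : Fin n → ℝ) (e : Fin m → ℝ)
    (z : (Fin n → ℝ) → (Fin m → ℝ) → ℝ)
    (hz : ∀ x y, z x y = x ⬝ᵥ C.mulVec y + g ⬝ᵥ x + e ⬝ᵥ y)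
    (X : Set (Fin n → ℝ)) (Y : Set (Fin m → ℝ))
    (hX : X = {x | A.mulVec x ≤ a ∧ 0 ≤ x})
    (hY : Y = {y | B.mulVec y ≤ b ∧ 0 ≤ y})
    (hXne : X.Nonempty) (hYne : Y.Nonempty)
    (hXbd : Bornology.IsBounded X) (hYbd : Bornology.IsBounded Y)
    (hstar : ℝ) (hmin : IsLeast (Set.image2 z X Y) hstar)
    (hincons : ¬ ∃ (u : Fin q → ℝ) (y : Fin m → ℝ),
        -(Aᵀ.mulVec u) - C.mulVec y ≤ g ∧ a ⬝ᵥ u - e ⬝ᵥ y < -hstar ∧ 0 ≤ u) :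
    (∃ x : Fin n → ℝ,
        A.mulVec x ≤ a ∧ Cᵀ.mulVec x = -e ∧ g ⬝ᵥ x = hstar ∧ 0 ≤ x) ∧
    (∀ x : Fin n → ℝ,
        A.mulVec x ≤ a → Cᵀ.mulVec x = -e → g ⬝ᵥ x = hstar → 0 ≤ x →
        ∀ y ∈ Y, z x y = hstar) :=
  stmt_7_general n m q C A a g e z hz X Y hX hXne hYne hXbd hstar hmin hincons
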